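/- arXiv:2402.03809 — 7 statements merged into one kernel-verified Lean document; each statement's English description precedes it below -/
import Mathlib

section
/- Let n be a positive natural number, K_C and K_E invertible n×n real matrices, ρ ∈ ℝ, and k_C, k_E, y_C, y_E ∈ ℝⁿ. Set the 2n×2n block matrix M = [[K_C, ρK_C], [ρK_C, ρ²K_C + K_E]], the 2n-vector k̃ = (ρk_C, ρ²k_C + k_E) and the 2n-vector ỹ = (y_C, y_E). Then k̃ᵀ M⁻¹ ỹ = ρ · k_Cᵀ K_C⁻¹ y_C + k_Eᵀ K_E⁻¹ (y_E − ρ y_C). In words: the joint (Kennedy–O'Hagan) multi-fidelity predictive mean equals the recursive-formulation predictive mean. -/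
/-!
The joint covariance factors as `M = Lᵀ * diag(K_C, K_E) * L` with the shear `L = [[1, ρ], [0, 1]]`,
so `M⁻¹ = L⁻¹ * diag(K_C⁻¹, K_E⁻¹) * L⁻ᵀ`. Here `k̃ᵀ L⁻¹ = (ρ k_C, k_E)ᵀ` and
`L⁻ᵀ ỹ = (y_C, y_E - ρ y_C)`; the block-diagonal middle factor then splits the bilinear form into
the coarse and the correction term.
-/

open Matrix

section Autoregressive

variable {ι R : Type*} [Fintype ι] [DecidableEq ι] [CommRing R]

theorem fromBlocks_autoregressive_eq_mul (A B : Matrix ι ι R) (ρ : R) :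
    fromBlocks A (ρ • A) (ρ • A) (ρ ^ 2 • A + B) =
      fromBlocks 1 0 (ρ • 1) 1 * fromBlocks A 0 0 B * fromBlocks 1 (ρ • 1) 0 1 := by
  simp only [fromBlocks_multiply, Matrix.one_mul, Matrix.mul_one, Matrix.zero_mul,
    Matrix.mul_zero, add_zero, zero_add, Matrix.smul_mul, Matrix.mul_smul, smul_smul, sq]

theorem inv_fromBlocks_autoregressive {A B : Matrix ι ι R} (hA : IsUnit A.det)
    (hB : IsUnit B.det) (ρ : R) :
    (fromBlocks A (ρ • A) (ρ • A) (ρ ^ 2 • A + B))⁻¹ =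
      fromBlocks 1 (-ρ • 1) 0 1 * fromBlocks A⁻¹ 0 0 B⁻¹ * fromBlocks 1 0 (-ρ • 1) 1 := by
  have hAB : IsUnit A ↔ IsUnit B := by simp [isUnit_iff_isUnit_det, hA, hB]
  rw [fromBlocks_autoregressive_eq_mul, Matrix.mul_inv_rev, Matrix.mul_inv_rev,
    inv_fromBlocks_zero₂₁_of_isUnit_iff _ _ _ Iff.rfl,
    inv_fromBlocks_zero₁₂_of_isUnit_iff _ _ _ Iff.rfl,
    inv_fromBlocks_zero₁₂_of_isUnit_iff _ _ _ hAB]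
  simp [Matrix.mul_assoc]

theorem sumElim_vecMul_fromBlocks_one_smul_zero_one (ρ : R) (u v : ι → R) :
    Sum.elim u v ᵥ* fromBlocks 1 (ρ • 1) 0 1 = Sum.elim u (v + ρ • u) := by
  simp [vecMul_fromBlocks, vecMul_smul, add_comm]

theorem fromBlocks_one_zero_smul_one_mulVec_sumElim (ρ : R) (u v : ι → R) :
    fromBlocks 1 0 (ρ • 1) 1 *ᵥ Sum.elim u v = Sum.elim u (ρ • u + v) := by
  simp [fromBlocks_mulVec, smul_mulVec]

end Autoregressive

theorem mufi_predictive_mean_equal_designs_general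
    (n : ℕ)
    (K_C K_E : Matrix (Fin n) (Fin n) ℝ)
    (hC : IsUnit K_C.det) (hE : IsUnit K_E.det)
    (ρ : ℝ) (k_C k_E y_C y_E : Fin n → ℝ) :
    let M : Matrix (Fin n ⊕ Fin n) (Fin n ⊕ Fin n) ℝ :=
      Matrix.fromBlocks K_C (ρ • K_C) (ρ • K_C) (ρ ^ 2 • K_C + K_E)
    let k : Fin n ⊕ Fin n → ℝ := Sum.elim (ρ • k_C) (ρ ^ 2 • k_C + k_E)
    let y : Fin n ⊕ Fin n → ℝ := Sum.elim y_C y_E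
    k ⬝ᵥ (M⁻¹ *ᵥ y) =
      ρ * (k_C ⬝ᵥ (K_C⁻¹ *ᵥ y_C)) + k_E ⬝ᵥ (K_E⁻¹ *ᵥ (y_E - ρ • y_C)) := by
  intro M k y
  have hk : k ᵥ* fromBlocks 1 (-ρ • 1) 0 1 = Sum.elim (ρ • k_C) k_E := by
    rw [sumElim_vecMul_fromBlocks_one_smul_zero_one]
    congr 1
    module
  have hy : fromBlocks 1 0 (-ρ • 1) 1 *ᵥ y = Sum.elim y_C (y_E - ρ • y_C) := by
    rw [fromBlocks_one_zero_smul_one_mulVec_sumElim]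
    congr 1
    module
  rw [inv_fromBlocks_autoregressive hC hE, ← mulVec_mulVec, ← mulVec_mulVec,
    dotProduct_mulVec, hk, hy, fromBlocks_mulVec]
  simp [sumElim_dotProduct_sumElim, smul_dotProduct]

theorem mufi_predictive_mean_equal_designs
    (n : ℕ) (hn : 0 < n)
    (K_C K_E : Matrix (Fin n) (Fin n) ℝ)
    (hC : IsUnit K_C.det) (hE : IsUnit K_E.det)
    (ρ : ℝ) (k_C k_E y_C y_E : Fin n → ℝ) :
    let M : Matrix (Fin n ⊕ Fin n) (Fin n ⊕ Fin n) ℝ :=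
      Matrix.fromBlocks K_C (ρ • K_C) (ρ • K_C) (ρ ^ 2 • K_C + K_E)
    let k : Fin n ⊕ Fin n → ℝ := Sum.elim (ρ • k_C) (ρ ^ 2 • k_C + k_E)
    let y : Fin n ⊕ Fin n → ℝ := Sum.elim y_C y_E
    k ⬝ᵥ (M⁻¹ *ᵥ y) =
      ρ * (k_C ⬝ᵥ (K_C⁻¹ *ᵥ y_C)) + k_E ⬝ᵥ (K_E⁻¹ *ᵥ (y_E - ρ • y_C)) :=
  mufi_predictive_mean_equal_designs_general n K_C K_E hC hE ρ k_C k_E y_C y_E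
end

section
/- Let n be a positive natural number, K_C and K_E invertible n×n real matrices, ρ ∈ ℝ, and k_C, k_E ∈ ℝⁿ. Set the 2n×2n block matrix M = [[K_C, ρK_C], [ρK_C, ρ²K_C + K_E]] and the 2n-vector k̃ = (ρk_C, ρ²k_C + k_E). Then k̃ᵀ M⁻¹ k̃ = ρ² · k_Cᵀ K_C⁻¹ k_C + k_Eᵀ K_E⁻¹ k_E. Consequently, for any real numbers c_C and c_E, the quantity ρ²c_C + c_E − k̃ᵀ M⁻¹ k̃ equals ρ²(c_C − k_Cᵀ K_C⁻¹ k_C) + (c_E − k_Eᵀ K_E⁻¹ k_E); that is, the joint multi-fidelity predictive variance decomposes as s²_{n,E}(x) = ρ² s²_{n,C}(x) + s²_{n,d}(x). -/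
/-!
With the block shear `P = [[1, ρ], [0, 1]]` one has `M = Pᵀ · diag(K_C, K_E) · P` and
`k̃ = Pᵀ (ρ k_C, k_E)`. A quadratic form `k̃ᵀ M⁻¹ k̃` is invariant under such a congruence, so it
equals the block-diagonal form `(ρ k_C)ᵀ K_C⁻¹ (ρ k_C) + k_Eᵀ K_E⁻¹ k_E`.
-/

open Matrix

namespace Matrix

variable {m n R : Type*} [Fintype m] [DecidableEq m] [Fintype n] [DecidableEq n] [CommRing R]

theorem vecMul_dotProduct_inv_transpose_mul_mul_mulVec_vecMul {P : Matrix m m R}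
    (hP : IsUnit P.det) (D : Matrix m m R) (u : m → R) :
    (u ᵥ* P) ⬝ᵥ ((Pᵀ * D * P)⁻¹ *ᵥ (u ᵥ* P)) = u ⬝ᵥ (D⁻¹ *ᵥ u) := by
  have hPt : IsUnit Pᵀ.det := by rwa [det_transpose]
  rw [← dotProduct_mulVec, ← mulVec_transpose, mulVec_mulVec, mulVec_mulVec,
    mul_inv_rev, mul_inv_rev, ← Matrix.mul_assoc, ← Matrix.mul_assoc, mul_nonsing_inv _ hP,
    Matrix.one_mul, Matrix.mul_assoc, nonsing_inv_mul _ hPt, Matrix.mul_one]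

theorem sumElim_dotProduct_inv_fromBlocks_zero_zero_mulVec {A : Matrix m m R} {D : Matrix n n R}
    (hA : IsUnit A.det) (hD : IsUnit D.det) (a : m → R) (b : n → R) :
    Sum.elim a b ⬝ᵥ ((fromBlocks A 0 0 D)⁻¹ *ᵥ Sum.elim a b) =
      a ⬝ᵥ (A⁻¹ *ᵥ a) + b ⬝ᵥ (D⁻¹ *ᵥ b) := by
  have hAD : IsUnit A ↔ IsUnit D := by
    simp only [isUnit_iff_isUnit_det, hA, hD]
  rw [inv_fromBlocks_zero₂₁_of_isUnit_iff _ _ _ hAD, fromBlocks_mulVec, sumElim_dotProduct_sumElim]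
  simp

theorem transpose_fromBlocks_shear_mul_mul (ρ : R) (A D : Matrix n n R) :
    (fromBlocks 1 (ρ • 1) 0 1)ᵀ * fromBlocks A 0 0 D * fromBlocks 1 (ρ • 1) 0 1 =
      fromBlocks A (ρ • A) (ρ • A) (ρ ^ 2 • A + D) := by
  simp [fromBlocks_transpose, fromBlocks_multiply, pow_two, smul_smul]

theorem sumElim_vecMul_fromBlocks_shear (ρ : R) (a b : n → R) :
    Sum.elim a b ᵥ* fromBlocks 1 (ρ • 1) 0 1 = Sum.elim a (ρ • a + b) := by
  simp [vecMul_fromBlocks, vecMul_smul]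

end Matrix

theorem mufi_predictive_variance_equal_designs_general
    (n : ℕ)
    (K_C K_E : Matrix (Fin n) (Fin n) ℝ)
    (hC : IsUnit K_C.det) (hE : IsUnit K_E.det)
    (ρ : ℝ) (k_C k_E : Fin n → ℝ) :
    let M : Matrix (Fin n ⊕ Fin n) (Fin n ⊕ Fin n) ℝ :=
      Matrix.fromBlocks K_C (ρ • K_C) (ρ • K_C) (ρ ^ 2 • K_C + K_E)
    let k : Fin n ⊕ Fin n → ℝ := Sum.elim (ρ • k_C) (ρ ^ 2 • k_C + k_E)
    k ⬝ᵥ (M⁻¹ *ᵥ k) =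
      ρ ^ 2 * (k_C ⬝ᵥ (K_C⁻¹ *ᵥ k_C)) + k_E ⬝ᵥ (K_E⁻¹ *ᵥ k_E) ∧
    ∀ c_C c_E : ℝ,
      ρ ^ 2 * c_C + c_E - k ⬝ᵥ (M⁻¹ *ᵥ k) =
        ρ ^ 2 * (c_C - k_C ⬝ᵥ (K_C⁻¹ *ᵥ k_C)) + (c_E - k_E ⬝ᵥ (K_E⁻¹ *ᵥ k_E)) := by
  intro M k
  set P : Matrix (Fin n ⊕ Fin n) (Fin n ⊕ Fin n) ℝ := fromBlocks 1 (ρ • 1) 0 1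
  have hP : IsUnit P.det := by simp [P]
  have hM : M = Pᵀ * fromBlocks K_C 0 0 K_E * P :=
    (transpose_fromBlocks_shear_mul_mul ρ K_C K_E).symm
  have hk : k = Sum.elim (ρ • k_C) k_E ᵥ* P := by
    rw [sumElim_vecMul_fromBlocks_shear, smul_smul, ← pow_two]
  have key : k ⬝ᵥ (M⁻¹ *ᵥ k) =
      ρ ^ 2 * (k_C ⬝ᵥ (K_C⁻¹ *ᵥ k_C)) + k_E ⬝ᵥ (K_E⁻¹ *ᵥ k_E) := by
    rw [hM, hk, vecMul_dotProduct_inv_transpose_mul_mul_mulVec_vecMul hP,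
      sumElim_dotProduct_inv_fromBlocks_zero_zero_mulVec hC hE, mulVec_smul, smul_dotProduct,
      dotProduct_smul, smul_smul, smul_eq_mul, pow_two]
  exact ⟨key, fun c_C c_E => by rw [key]; ring⟩

theorem mufi_predictive_variance_equal_designs
    (n : ℕ) (hn : 0 < n)
    (K_C K_E : Matrix (Fin n) (Fin n) ℝ)
    (hC : IsUnit K_C.det) (hE : IsUnit K_E.det)
    (ρ : ℝ) (k_C k_E : Fin n → ℝ) :
    let M : Matrix (Fin n ⊕ Fin n) (Fin n ⊕ Fin n) ℝ :=
      Matrix.fromBlocks K_C (ρ • K_C) (ρ • K_C) (ρ ^ 2 • K_C + K_E)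
    let k : Fin n ⊕ Fin n → ℝ := Sum.elim (ρ • k_C) (ρ ^ 2 • k_C + k_E)
    k ⬝ᵥ (M⁻¹ *ᵥ k) =
      ρ ^ 2 * (k_C ⬝ᵥ (K_C⁻¹ *ᵥ k_C)) + k_E ⬝ᵥ (K_E⁻¹ *ᵥ k_E) ∧
    ∀ c_C c_E : ℝ,
      ρ ^ 2 * c_C + c_E - k ⬝ᵥ (M⁻¹ *ᵥ k) =
        ρ ^ 2 * (c_C - k_C ⬝ᵥ (K_C⁻¹ *ᵥ k_C)) + (c_E - k_E ⬝ᵥ (K_E⁻¹ *ᵥ k_E)) :=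
  mufi_predictive_variance_equal_designs_general n K_C K_E hC hE ρ k_C k_E
end

section
/- Let n_C ≥ n_E be positive natural numbers, K_C an invertible n_C×n_C real matrix, K_E an invertible n_E×n_E real matrix, ρ ∈ ℝ, and let P be the n_E×n_C matrix [I_{n_E} 0] (i.e., P i j = 1 if j is the image of i under the canonical embedding Fin n_E → Fin n_C and 0 otherwise). Then the (n_C+n_E)×(n_C+n_E) block matrix M = [[K_C, ρ K_C Pᵀ], [ρ P K_C, ρ² P K_C Pᵀ + K_E]] is invertible with inverse N = [[K_C⁻¹ + ρ² Pᵀ K_E⁻¹ P, −ρ Pᵀ K_E⁻¹], [−ρ K_E⁻¹ P, K_E⁻¹]]; that is, M·N = I and N·M = I. -/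
/-!
Writing `G = ρ P`, the matrix `M` is `[[K_C, K_C Gᵀ], [G K_C, G K_C Gᵀ + K_E]]`, whose Schur
complement with respect to `K_C` is `K_E`; the claimed `N` is the usual Schur-complement block
inverse. Checking `M * N = 1` is a block computation using only `K_C K_C⁻¹ = 1` and
`K_E K_E⁻¹ = 1`, and `N * M = 1` follows because a one-sided inverse of a square matrix over a
commutative ring is two-sided.
-/

open Matrix

namespace Matrix

variable {m n R : Type*} [Fintype m] [Fintype n] [DecidableEq m] [DecidableEq n] [CommRing R]

theorem fromBlocks_mul_fromBlocks_eq_one_of_schur (A : Matrix m m R) (D : Matrix n n R)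
    (B : Matrix n m R) (C : Matrix m n R) (hA : IsUnit A.det) (hD : IsUnit D.det) :
    fromBlocks A (A * C) (B * A) (B * A * C + D) *
      fromBlocks (A⁻¹ + C * D⁻¹ * B) (-(C * D⁻¹)) (-(D⁻¹ * B)) D⁻¹ = 1 := by
  have hAA : A * A⁻¹ = 1 := mul_nonsing_inv A hA
  have hDD : D * D⁻¹ = 1 := mul_nonsing_inv D hD
  rw [fromBlocks_multiply, ← fromBlocks_one]
  congr 1 <;>
    simp only [Matrix.mul_add, Matrix.add_mul, Matrix.mul_neg, Matrix.mul_assoc,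
      ← Matrix.mul_assoc D D⁻¹, hAA, hDD, Matrix.one_mul, Matrix.mul_one] <;>
    abel

end Matrix

theorem mufi_block_inverse_nested_designs_general
    (nC nE : ℕ)
    (K_C : Matrix (Fin nC) (Fin nC) ℝ) (K_E : Matrix (Fin nE) (Fin nE) ℝ)
    (hC : IsUnit K_C.det) (hE : IsUnit K_E.det)
    (ρ : ℝ)
    (P : Matrix (Fin nE) (Fin nC) ℝ) :
    let M : Matrix (Fin nC ⊕ Fin nE) (Fin nC ⊕ Fin nE) ℝ :=
      Matrix.fromBlocks K_C (ρ • (K_C * Pᵀ)) (ρ • (P * K_C))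
        (ρ ^ 2 • (P * K_C * Pᵀ) + K_E)
    let N : Matrix (Fin nC ⊕ Fin nE) (Fin nC ⊕ Fin nE) ℝ :=
      Matrix.fromBlocks (K_C⁻¹ + ρ ^ 2 • (Pᵀ * K_E⁻¹ * P)) (-(ρ • (Pᵀ * K_E⁻¹)))
        (-(ρ • (K_E⁻¹ * P))) K_E⁻¹
    M * N = 1 ∧ N * M = 1 := by
  intro M N
  have hM : M = fromBlocks K_C (K_C * (ρ • Pᵀ)) ((ρ • P) * K_C)
      ((ρ • P) * K_C * (ρ • Pᵀ) + K_E) := by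
    simp only [M, Matrix.mul_smul, Matrix.smul_mul, smul_smul, sq]
  have hN : N = fromBlocks (K_C⁻¹ + (ρ • Pᵀ) * K_E⁻¹ * (ρ • P)) (-((ρ • Pᵀ) * K_E⁻¹))
      (-(K_E⁻¹ * (ρ • P))) K_E⁻¹ := by
    simp only [N, Matrix.mul_smul, Matrix.smul_mul, smul_smul, sq]
  have hMN : M * N = 1 := by
    rw [hM, hN]
    exact fromBlocks_mul_fromBlocks_eq_one_of_schur K_C K_E (ρ • P) (ρ • Pᵀ) hC hE
  exact ⟨hMN, mul_eq_one_comm.mp hMN⟩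

theorem mufi_block_inverse_nested_designs
    (nC nE : ℕ) (hnC : 0 < nC) (hnE : 0 < nE) (h : nE ≤ nC)
    (K_C : Matrix (Fin nC) (Fin nC) ℝ) (K_E : Matrix (Fin nE) (Fin nE) ℝ)
    (hC : IsUnit K_C.det) (hE : IsUnit K_E.det)
    (ρ : ℝ)
    (P : Matrix (Fin nE) (Fin nC) ℝ)
    (hP : ∀ i j, P i j = if Fin.castLE h i = j then 1 else 0) :
    let M : Matrix (Fin nC ⊕ Fin nE) (Fin nC ⊕ Fin nE) ℝ :=
      Matrix.fromBlocks K_C (ρ • (K_C * Pᵀ)) (ρ • (P * K_C))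
        (ρ ^ 2 • (P * K_C * Pᵀ) + K_E)
    let N : Matrix (Fin nC ⊕ Fin nE) (Fin nC ⊕ Fin nE) ℝ :=
      Matrix.fromBlocks (K_C⁻¹ + ρ ^ 2 • (Pᵀ * K_E⁻¹ * P)) (-(ρ • (Pᵀ * K_E⁻¹)))
        (-(ρ • (K_E⁻¹ * P))) K_E⁻¹
    M * N = 1 ∧ N * M = 1 :=
  mufi_block_inverse_nested_designs_general nC nE K_C K_E hC hE ρ P
end

section
/- Let n_C ≥ n_E be positive natural numbers, K_C an invertible n_C×n_C real matrix, K_E an invertible n_E×n_E real matrix, ρ ∈ ℝ, P the n_E×n_C matrix [I_{n_E} 0], and vectors a, y_C ∈ ℝ^{n_C}, b, y_E ∈ ℝ^{n_E}. Set M = [[K_C, ρ K_C Pᵀ], [ρ P K_C, ρ² P K_C Pᵀ + K_E]], k̃ = (ρa, ρ²Pa + b), ỹ = (y_C, y_E). Then k̃ᵀ M⁻¹ ỹ = ρ · aᵀ K_C⁻¹ y_C + bᵀ K_E⁻¹ (y_E − ρ P y_C); that is, the joint multi-fidelity predictive mean equals the recursive-formulation mean in the nested-design case. -/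
/-!
Writing `L = [[1, 0], [ρ P, 1]]`, the joint covariance factors as `M = L · diag(K_C, K_E) · Lᵀ`
and the cross-covariance vector as `k = L (ρ a, b)`. Hence `kᵀ M⁻¹ y = (ρ a, b)ᵀ diag(K_C, K_E)⁻¹ L⁻¹ y`,
and `L⁻¹ y = (y_C, y_E - ρ P y_C)` is exactly the residual the recursive formulation feeds to the
fine level.
-/

open Matrix

namespace Matrix

variable {m n R : Type*} [Fintype m] [Fintype n] [DecidableEq m] [DecidableEq n]

theorem fromBlocks_eq_lowerUnitriangular_mul_blockDiagonal_mul_transpose [Semiring R]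
    (K : Matrix m m R) (E : Matrix n n R) (C : Matrix n m R) :
    fromBlocks K (K * Cᵀ) (C * K) (C * K * Cᵀ + E) =
      fromBlocks 1 0 C 1 * fromBlocks K 0 0 E * (fromBlocks 1 0 C 1)ᵀ := by
  simp [fromBlocks_transpose, fromBlocks_multiply]

theorem inv_fromBlocks_one_zero_one [CommRing R] (C : Matrix n m R) :
    (fromBlocks 1 0 C 1 : Matrix (m ⊕ n) (m ⊕ n) R)⁻¹ = fromBlocks 1 0 (-C) 1 := by
  simp [inv_fromBlocks_zero₁₂_of_isUnit_iff]

theorem isUnit_det_fromBlocks_one_zero_one [CommRing R] (C : Matrix n m R) :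
    IsUnit (fromBlocks 1 0 C 1 : Matrix (m ⊕ n) (m ⊕ n) R).det := by
  simp

theorem mulVec_dotProduct_inv_mul_mul_transpose_mulVec [CommRing R] {L : Matrix n n R}
    (hL : IsUnit L.det) (D : Matrix n n R) (v y : n → R) :
    (L *ᵥ v) ⬝ᵥ ((L * D * Lᵀ)⁻¹ *ᵥ y) = v ⬝ᵥ (D⁻¹ *ᵥ (L⁻¹ *ᵥ y)) := by
  have hLt : Lᵀ * Lᵀ⁻¹ = 1 := mul_nonsing_inv _ ((det_transpose L).symm ▸ hL)
  rw [mul_inv_rev, mul_inv_rev, ← vecMul_transpose, ← dotProduct_mulVec, mulVec_mulVec,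
    ← Matrix.mul_assoc, hLt, Matrix.one_mul, ← mulVec_mulVec]

end Matrix

theorem mufi_predictive_mean_nested_designs_general
    (nC nE : ℕ)
    (K_C : Matrix (Fin nC) (Fin nC) ℝ) (K_E : Matrix (Fin nE) (Fin nE) ℝ)
    (hC : IsUnit K_C.det) (hE : IsUnit K_E.det)
    (ρ : ℝ)
    (P : Matrix (Fin nE) (Fin nC) ℝ)
    (a y_C : Fin nC → ℝ) (b y_E : Fin nE → ℝ) :
    let M : Matrix (Fin nC ⊕ Fin nE) (Fin nC ⊕ Fin nE) ℝ :=
      Matrix.fromBlocks K_C (ρ • (K_C * Pᵀ)) (ρ • (P * K_C))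
        (ρ ^ 2 • (P * K_C * Pᵀ) + K_E)
    let k : Fin nC ⊕ Fin nE → ℝ := Sum.elim (ρ • a) (ρ ^ 2 • (P *ᵥ a) + b)
    let y : Fin nC ⊕ Fin nE → ℝ := Sum.elim y_C y_E
    k ⬝ᵥ (M⁻¹ *ᵥ y) =
      ρ * (a ⬝ᵥ (K_C⁻¹ *ᵥ y_C)) + b ⬝ᵥ (K_E⁻¹ *ᵥ (y_E - ρ • (P *ᵥ y_C))) := by
  intro M k y
  set L : Matrix (Fin nC ⊕ Fin nE) (Fin nC ⊕ Fin nE) ℝ := fromBlocks 1 0 (ρ • P) 1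
  have hM : M = L * fromBlocks K_C 0 0 K_E * Lᵀ := by
    rw [← fromBlocks_eq_lowerUnitriangular_mul_blockDiagonal_mul_transpose]
    simp [M, pow_two, mul_smul, Matrix.mul_assoc]
  have hk : k = L *ᵥ Sum.elim (ρ • a) b := by
    simp [k, L, fromBlocks_mulVec, pow_two, mul_smul, smul_mulVec, mulVec_smul]
  have hD : IsUnit K_C ↔ IsUnit K_E :=
    ⟨fun _ => (isUnit_iff_isUnit_det _).mpr hE, fun _ => (isUnit_iff_isUnit_det _).mpr hC⟩
  rw [hM, hk, mulVec_dotProduct_inv_mul_mul_transpose_mulVec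
    (isUnit_det_fromBlocks_one_zero_one _), inv_fromBlocks_one_zero_one,
    inv_fromBlocks_zero₁₂_of_isUnit_iff _ _ _ hD]
  simp [y, fromBlocks_mulVec, sub_eq_add_neg, neg_mulVec, smul_mulVec, add_comm]

theorem mufi_predictive_mean_nested_designs
    (nC nE : ℕ) (hnC : 0 < nC) (hnE : 0 < nE) (h : nE ≤ nC)
    (K_C : Matrix (Fin nC) (Fin nC) ℝ) (K_E : Matrix (Fin nE) (Fin nE) ℝ)
    (hC : IsUnit K_C.det) (hE : IsUnit K_E.det)
    (ρ : ℝ)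
    (P : Matrix (Fin nE) (Fin nC) ℝ)
    (hP : ∀ i j, P i j = if Fin.castLE h i = j then 1 else 0)
    (a y_C : Fin nC → ℝ) (b y_E : Fin nE → ℝ) :
    let M : Matrix (Fin nC ⊕ Fin nE) (Fin nC ⊕ Fin nE) ℝ :=
      Matrix.fromBlocks K_C (ρ • (K_C * Pᵀ)) (ρ • (P * K_C))
        (ρ ^ 2 • (P * K_C * Pᵀ) + K_E)
    let k : Fin nC ⊕ Fin nE → ℝ := Sum.elim (ρ • a) (ρ ^ 2 • (P *ᵥ a) + b)
    let y : Fin nC ⊕ Fin nE → ℝ := Sum.elim y_C y_E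
    k ⬝ᵥ (M⁻¹ *ᵥ y) =
      ρ * (a ⬝ᵥ (K_C⁻¹ *ᵥ y_C)) + b ⬝ᵥ (K_E⁻¹ *ᵥ (y_E - ρ • (P *ᵥ y_C))) :=
  mufi_predictive_mean_nested_designs_general nC nE K_C K_E hC hE ρ P a y_C b y_E
end

section
/- Let n_C ≥ n_E be positive natural numbers, K_C an invertible n_C×n_C real matrix, K_E an invertible n_E×n_E real matrix, ρ ∈ ℝ, P the n_E×n_C matrix [I_{n_E} 0], and vectors a ∈ ℝ^{n_C}, b ∈ ℝ^{n_E}. Set M = [[K_C, ρ K_C Pᵀ], [ρ P K_C, ρ² P K_C Pᵀ + K_E]] and k̃ = (ρa, ρ²Pa + b). Then k̃ᵀ M⁻¹ k̃ = ρ² · aᵀ K_C⁻¹ a + bᵀ K_E⁻¹ b; that is, the joint multi-fidelity predictive variance reduction term decomposes into the coarse-level and discrepancy-level reduction terms in the nested-design case. -/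
/-!
Writing `L = [[1, 0], [ρ P, 1]]`, the joint covariance factors as `M = L (K_C ⊕ K_E) Lᵀ` and the
joint kernel vector as `k = L (ρ a, b)`. The factor `L` cancels in `kᵀ M⁻¹ k`, leaving the quadratic
form of the block-diagonal matrix `K_C ⊕ K_E`, which splits into the two level-wise terms.
-/

open Matrix

namespace Matrix

variable {m n R : Type*} [Fintype m] [Fintype n] [DecidableEq m] [DecidableEq n]

theorem fromBlocks_eq_lowerUnitriangular_mul_blockDiag_mul_transpose [CommRing R]
    (A : Matrix m m R) (B : Matrix n n R) (C : Matrix n m R) :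
    fromBlocks A (A * Cᵀ) (C * A) (C * A * Cᵀ + B) =
      fromBlocks 1 0 C 1 * fromBlocks A 0 0 B * (fromBlocks 1 0 C 1)ᵀ := by
  simp [fromBlocks_transpose, fromBlocks_multiply]

theorem mulVec_dotProduct_inv_congr_mulVec [CommRing R]
    (L D : Matrix m m R) (hL : IsUnit L.det) (v : m → R) :
    (L *ᵥ v) ⬝ᵥ ((L * D * Lᵀ)⁻¹ *ᵥ (L *ᵥ v)) = v ⬝ᵥ (D⁻¹ *ᵥ v) := by
  have hLv : L⁻¹ *ᵥ (L *ᵥ v) = v := by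
    rw [mulVec_mulVec, nonsing_inv_mul L hL, one_mulVec]
  rw [Matrix.mul_inv_rev, Matrix.mul_inv_rev, ← transpose_nonsing_inv, ← mulVec_mulVec,
    dotProduct_mulVec, vecMul_transpose, hLv, ← mulVec_mulVec, hLv]

theorem sumElim_dotProduct_inv_fromBlocks_diag_mulVec [CommRing R]
    (A : Matrix m m R) (B : Matrix n n R) (hA : IsUnit A.det) (hB : IsUnit B.det)
    (x : m → R) (y : n → R) :
    Sum.elim x y ⬝ᵥ ((fromBlocks A 0 0 B)⁻¹ *ᵥ Sum.elim x y) =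
      x ⬝ᵥ (A⁻¹ *ᵥ x) + y ⬝ᵥ (B⁻¹ *ᵥ y) := by
  have hAB : IsUnit A ↔ IsUnit B := by
    simp only [isUnit_iff_isUnit_det, hA, hB]
  rw [inv_fromBlocks_zero₁₂_of_isUnit_iff A 0 B hAB, fromBlocks_mulVec, dotProduct_block]
  simp

end Matrix

theorem mufi_predictive_variance_nested_designs_general
    (nC nE : ℕ)
    (K_C : Matrix (Fin nC) (Fin nC) ℝ) (K_E : Matrix (Fin nE) (Fin nE) ℝ)
    (hC : IsUnit K_C.det) (hE : IsUnit K_E.det)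
    (ρ : ℝ)
    (P : Matrix (Fin nE) (Fin nC) ℝ)
    (a : Fin nC → ℝ) (b : Fin nE → ℝ) :
    let M : Matrix (Fin nC ⊕ Fin nE) (Fin nC ⊕ Fin nE) ℝ :=
      Matrix.fromBlocks K_C (ρ • (K_C * Pᵀ)) (ρ • (P * K_C))
        (ρ ^ 2 • (P * K_C * Pᵀ) + K_E)
    let k : Fin nC ⊕ Fin nE → ℝ := Sum.elim (ρ • a) (ρ ^ 2 • (P *ᵥ a) + b)
    k ⬝ᵥ (M⁻¹ *ᵥ k) =
      ρ ^ 2 * (a ⬝ᵥ (K_C⁻¹ *ᵥ a)) + b ⬝ᵥ (K_E⁻¹ *ᵥ b) := by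
  intro M k
  set L : Matrix (Fin nC ⊕ Fin nE) (Fin nC ⊕ Fin nE) ℝ := fromBlocks 1 0 (ρ • P) 1
  have hL : IsUnit L.det := by simp [L]
  have hM : M = L * fromBlocks K_C 0 0 K_E * Lᵀ := by
    rw [← fromBlocks_eq_lowerUnitriangular_mul_blockDiag_mul_transpose]
    simp [M, Matrix.mul_smul, Matrix.smul_mul, smul_smul, sq]
  have hk : k = L *ᵥ Sum.elim (ρ • a) b := by
    simp [k, L, fromBlocks_mulVec, smul_mulVec, mulVec_smul, smul_smul, sq]
  rw [hM, hk, mulVec_dotProduct_inv_congr_mulVec L _ hL,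
    sumElim_dotProduct_inv_fromBlocks_diag_mulVec K_C K_E hC hE]
  simp [mulVec_smul, smul_dotProduct, dotProduct_smul, smul_eq_mul, sq, mul_assoc]

theorem mufi_predictive_variance_nested_designs
    (nC nE : ℕ) (hnC : 0 < nC) (hnE : 0 < nE) (h : nE ≤ nC)
    (K_C : Matrix (Fin nC) (Fin nC) ℝ) (K_E : Matrix (Fin nE) (Fin nE) ℝ)
    (hC : IsUnit K_C.det) (hE : IsUnit K_E.det)
    (ρ : ℝ)
    (P : Matrix (Fin nE) (Fin nC) ℝ)
    (hP : ∀ i j, P i j = if Fin.castLE h i = j then 1 else 0)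
    (a : Fin nC → ℝ) (b : Fin nE → ℝ) :
    let M : Matrix (Fin nC ⊕ Fin nE) (Fin nC ⊕ Fin nE) ℝ :=
      Matrix.fromBlocks K_C (ρ • (K_C * Pᵀ)) (ρ • (P * K_C))
        (ρ ^ 2 • (P * K_C * Pᵀ) + K_E)
    let k : Fin nC ⊕ Fin nE → ℝ := Sum.elim (ρ • a) (ρ ^ 2 • (P *ᵥ a) + b)
    k ⬝ᵥ (M⁻¹ *ᵥ k) =
      ρ ^ 2 * (a ⬝ᵥ (K_C⁻¹ *ᵥ a)) + b ⬝ᵥ (K_E⁻¹ *ᵥ b) :=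
  mufi_predictive_variance_nested_designs_general nC nE K_C K_E hC hE ρ P a b
end

section
/- Let K be a symmetric positive definite n×n real matrix (n ≥ 1), g > 0 and ρ ≠ 0 real numbers. Then the matrix g ρ² K (K + gI)⁻¹ is symmetric positive definite; in particular it is nonzero, so in the noisy case the Schur complement K_E + gρ²K(K+gI)⁻¹ of the joint multi-fidelity covariance differs from the discrepancy covariance K_E. -/
open Matrix

lemma posdef_smul_aux {n : ℕ} {M : Matrix (Fin n) (Fin n) ℝ} (hM : M.PosDef)
    {c : ℝ} (hc : 0 < c) : (c • M).PosDef := by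
  refine posDef_iff_dotProduct_mulVec.mpr ⟨?_, fun x hx => ?_⟩
  · unfold Matrix.IsHermitian
    rw [conjTranspose_smul, hM.1.eq]
    simp
  · have := hM.dotProduct_mulVec_pos hx
    simpa [smul_mulVec, dotProduct_smul] using mul_pos hc this

theorem noisy_mufi_schur_posdef
    {n : ℕ} (hn : 1 ≤ n)
    (K : Matrix (Fin n) (Fin n) ℝ) (hK : K.PosDef)
    (g ρ : ℝ) (hg : 0 < g) (hρ : ρ ≠ 0) :
    ((g * ρ ^ 2) • (K * (K + g • (1 : Matrix (Fin n) (Fin n) ℝ))⁻¹)).PosDef ∧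
      ∀ K_E : Matrix (Fin n) (Fin n) ℝ,
        K_E + (g * ρ ^ 2) • (K * (K + g • (1 : Matrix (Fin n) (Fin n) ℝ))⁻¹)
          ≠ K_E := by
  set I : Matrix (Fin n) (Fin n) ℝ := 1
  have hgI : (g • I).PosDef := by
    have : (g • I) = Matrix.diagonal (fun _ : Fin n => g) := by
      simp [I, Matrix.smul_eq_diagonal_mul]
    rw [this]
    exact Matrix.PosDef.diagonal fun _ => hg
  have hKgI : (K + g • I).PosDef := hK.add hgI
  have hKinv : (K⁻¹).PosDef := hK.inv
  have hA : (I + g • K⁻¹).PosDef := by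
    have := Matrix.PosDef.one (n := Fin n) (R := ℝ)
    exact this.add (posdef_smul_aux hKinv hg)
  -- key identity: K * (K + gI)⁻¹ = (I + g • K⁻¹)⁻¹
  have hKunit : IsUnit K.det := isUnit_iff_ne_zero.mpr (ne_of_gt hK.det_pos)
  have hKgIunit : IsUnit (K + g • I).det := isUnit_iff_ne_zero.mpr (ne_of_gt hKgI.det_pos)
  have hfact : K + g • I = (I + g • K⁻¹) * K := by
    rw [add_mul, one_mul, smul_mul_assoc, Matrix.nonsing_inv_mul K hKunit]
  have hid : K * (K + g • I)⁻¹ = (I + g • K⁻¹)⁻¹ := by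
    rw [hfact, Matrix.mul_inv_rev, ← Matrix.mul_assoc,
      Matrix.mul_nonsing_inv K hKunit, Matrix.one_mul]
  have hpd : ((g * ρ ^ 2) • (K * (K + g • I)⁻¹)).PosDef := by
    rw [hid]
    exact posdef_smul_aux hA.inv (by positivity)
  refine ⟨hpd, fun K_E h => ?_⟩
  have hzero : (g * ρ ^ 2) • (K * (K + g • I)⁻¹) = 0 := by
    have := congrArg (· - K_E) h
    simpa [add_sub_cancel_left, add_comm, add_sub_cancel] using this
  obtain ⟨i⟩ := Fin.pos_iff_nonempty.mp hn
  have hx : (Pi.single i 1 : Fin n → ℝ) ≠ 0 := by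
    intro hc
    have := congrFun hc i
    simp at this
  have := hpd.dotProduct_mulVec_pos hx
  rw [hzero] at this
  simp at this
end

section
/- Let n ≥ 1, let K : ℝ → Matrix (Fin n) (Fin n) ℝ be a matrix-valued function having derivative K' at a point θ₀ (in the sense HasDerivAt), suppose K(θ₀) is invertible with det K(θ₀) > 0, and let y ∈ ℝⁿ. Then the function L(θ) = −(1/2) · yᵀ (K(θ))⁻¹ y − (1/2) · log (det K(θ)) has derivative at θ₀ equal to (1/2) · yᵀ K(θ₀)⁻¹ K' K(θ₀)⁻¹ y − (1/2) · trace(K(θ₀)⁻¹ K'). -/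
open Matrix

attribute [local instance] Matrix.normedAddCommGroup Matrix.normedSpace

section GPAux

open Finset

variable {n : ℕ}

private lemma gp_entry_hasDerivAt {A : ℝ → Matrix (Fin n) (Fin n) ℝ}
    {A' : Matrix (Fin n) (Fin n) ℝ}
    {θ₀ : ℝ} (h : HasDerivAt A A' θ₀) (i j : Fin n) :
    HasDerivAt (fun θ => A θ i j) (A' i j) θ₀ :=
  hasDerivAt_pi.1 (hasDerivAt_pi.1 h i) j

private lemma gp_matrix_hasDerivAt {A : ℝ → Matrix (Fin n) (Fin n) ℝ}
    {A' : Matrix (Fin n) (Fin n) ℝ}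
    {θ₀ : ℝ} (h : ∀ i j, HasDerivAt (fun θ => A θ i j) (A' i j) θ₀) :
    HasDerivAt A A' θ₀ :=
  hasDerivAt_pi.2 fun i => hasDerivAt_pi.2 fun j => h i j

private lemma gp_trace_adjugate_key (M B : Matrix (Fin n) (Fin n) ℝ) :
    ∑ σ : Equiv.Perm (Fin n), ((Equiv.Perm.sign σ : ℤ) : ℝ) *
        ∑ i, (∏ j ∈ univ.erase i, M (σ j) j) * B (σ i) i
      = (M.adjugate * B).trace := by
  have h1 : ∀ i : Fin n,
      (M.updateCol i (fun r => B r i)).det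
        = ∑ σ : Equiv.Perm (Fin n), ((Equiv.Perm.sign σ : ℤ) : ℝ) *
            ((∏ j ∈ univ.erase i, M (σ j) j) * B (σ i) i) := by
    intro i
    rw [Matrix.det_apply']
    refine Finset.sum_congr rfl fun σ _ => ?_
    congr 1
    rw [← Finset.mul_prod_erase univ _ (mem_univ i)]
    rw [Matrix.updateCol_apply, if_pos rfl]
    rw [Finset.prod_congr rfl (fun j hj => by
      rw [Matrix.updateCol_apply, if_neg (Finset.ne_of_mem_erase hj)])]
    ring
  calc ∑ σ : Equiv.Perm (Fin n), ((Equiv.Perm.sign σ : ℤ) : ℝ) *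
        ∑ i, (∏ j ∈ univ.erase i, M (σ j) j) * B (σ i) i
      = ∑ i, ∑ σ : Equiv.Perm (Fin n), ((Equiv.Perm.sign σ : ℤ) : ℝ) *
          ((∏ j ∈ univ.erase i, M (σ j) j) * B (σ i) i) := by
        rw [Finset.sum_comm]
        exact Finset.sum_congr rfl fun σ _ => Finset.mul_sum _ _ _
    _ = ∑ i, (M.updateCol i (fun r => B r i)).det :=
        Finset.sum_congr rfl fun i _ => (h1 i).symm
    _ = ∑ i, (M.adjugate *ᵥ (fun r => B r i)) i := by
        refine Finset.sum_congr rfl fun i _ => ?_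
        rw [← Matrix.cramer_apply, Matrix.cramer_eq_adjugate_mulVec]
    _ = (M.adjugate * B).trace := by
        simp [Matrix.trace, Matrix.mulVec, Matrix.mul_apply, Matrix.diag, dotProduct]

private lemma gp_det_hasDerivAt {A : ℝ → Matrix (Fin n) (Fin n) ℝ}
    {A' : Matrix (Fin n) (Fin n) ℝ}
    {θ₀ : ℝ} (h : HasDerivAt A A' θ₀) :
    HasDerivAt (fun θ => (A θ).det) ((A θ₀).adjugate * A').trace θ₀ := by
  have hσ : ∀ σ : Equiv.Perm (Fin n), HasDerivAt
      (fun θ => ((Equiv.Perm.sign σ : ℤ) : ℝ) * ∏ i, A θ (σ i) i)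
      (((Equiv.Perm.sign σ : ℤ) : ℝ) *
        ∑ i, (∏ j ∈ univ.erase i, A θ₀ (σ j) j) * A' (σ i) i) θ₀ := by
    intro σ
    have hp := HasDerivAt.finset_prod (u := univ)
      (f := fun i θ => A θ (σ i) i) (f' := fun i => A' (σ i) i)
      (fun i _ => gp_entry_hasDerivAt h (σ i) i)
    simpa [smul_eq_mul] using hp.const_mul (((Equiv.Perm.sign σ : ℤ) : ℝ))
  have hsum := HasDerivAt.fun_sum (u := univ) (fun σ _ => hσ σ)
  rw [gp_trace_adjugate_key] at hsum
  convert hsum using 1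
  · rfl
  · rfl
  funext θ
  rw [Matrix.det_apply']

private lemma gp_inv_hasDerivAt {K : ℝ → Matrix (Fin n) (Fin n) ℝ}
    {K' : Matrix (Fin n) (Fin n) ℝ}
    {θ₀ : ℝ} (hK : HasDerivAt K K' θ₀) (h0 : (K θ₀).det ≠ 0) :
    HasDerivAt (fun θ => (K θ)⁻¹) (-((K θ₀)⁻¹ * K' * (K θ₀)⁻¹)) θ₀ := by
  have hdet := gp_det_hasDerivAt hK
  have hdiff : ∀ i j, DifferentiableAt ℝ (fun θ => (K θ)⁻¹ i j) θ₀ := by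
    intro i j
    have hadjmat : HasDerivAt (fun θ => (K θ).updateRow j (Pi.single i 1))
        (K'.updateRow j 0) θ₀ := by
      apply gp_matrix_hasDerivAt
      intro r c
      have hf : (fun θ => ((K θ).updateRow j (Pi.single i 1)) r c)
          = fun θ => if r = j then (Pi.single i 1 : Fin n → ℝ) c else K θ r c := by
        funext θ; rw [Matrix.updateRow_apply]
      rw [hf, Matrix.updateRow_apply]
      rcases eq_or_ne r j with rfl | hr
      · simpa using hasDerivAt_const θ₀ ((Pi.single i 1 : Fin n → ℝ) c)
      · simpa [hr] using gp_entry_hasDerivAt hK r c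
    have hadj : DifferentiableAt ℝ (fun θ => (K θ).adjugate i j) θ₀ := by
      have := (gp_det_hasDerivAt hadjmat).differentiableAt
      simpa [Matrix.adjugate_apply] using this
    have heq : (fun θ => (K θ)⁻¹ i j) = fun θ => ((K θ).det)⁻¹ * (K θ).adjugate i j := by
      funext θ
      rw [Matrix.inv_def, Matrix.smul_apply, smul_eq_mul, Ring.inverse_eq_inv']
    rw [heq]
    exact (hdet.differentiableAt.inv h0).mul hadj
  set G : Matrix (Fin n) (Fin n) ℝ :=
    Matrix.of fun i j => deriv (fun θ => (K θ)⁻¹ i j) θ₀ with hGdef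
  have hG : HasDerivAt (fun θ => (K θ)⁻¹) G θ₀ :=
    gp_matrix_hasDerivAt fun i j => (hdiff i j).hasDerivAt
  have hne : ∀ᶠ θ in nhds θ₀, (K θ).det ≠ 0 :=
    hdet.continuousAt.eventually_ne h0
  have heq1 : ∀ᶠ θ in nhds θ₀, K θ * (K θ)⁻¹ = 1 :=
    hne.mono fun θ h => Matrix.mul_nonsing_inv _ (Ne.isUnit h)
  have hrel : K' * (K θ₀)⁻¹ + K θ₀ * G = 0 := by
    ext i j
    have hprod : HasDerivAt (fun θ => ∑ k, K θ i k * (K θ)⁻¹ k j)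
        (∑ k, (K' i k * (K θ₀)⁻¹ k j + K θ₀ i k * G k j)) θ₀ :=
      HasDerivAt.fun_sum fun k _ =>
        (gp_entry_hasDerivAt hK i k).mul (gp_entry_hasDerivAt hG k j)
    have hconst : HasDerivAt (fun θ => ∑ k, K θ i k * (K θ)⁻¹ k j) 0 θ₀ := by
      refine (hasDerivAt_const θ₀ ((1 : Matrix (Fin n) (Fin n) ℝ) i j)).congr_of_eventuallyEq ?_
      refine heq1.mono fun θ h => ?_
      show ∑ k, K θ i k * (K θ)⁻¹ k j = (1 : Matrix (Fin n) (Fin n) ℝ) i j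
      rw [← Matrix.mul_apply, h]
    have := hprod.unique hconst
    calc (K' * (K θ₀)⁻¹ + K θ₀ * G) i j
        = ∑ k, (K' i k * (K θ₀)⁻¹ k j + K θ₀ i k * G k j) := by
          simp [Matrix.add_apply, Matrix.mul_apply, Finset.sum_add_distrib]
      _ = 0 := this
  have hGval : G = -((K θ₀)⁻¹ * K' * (K θ₀)⁻¹) := by
    have h2 : K θ₀ * G = -(K' * (K θ₀)⁻¹) := eq_neg_of_add_eq_zero_right hrel
    calc G = (K θ₀)⁻¹ * (K θ₀ * G) := by
            rw [← Matrix.mul_assoc, Matrix.nonsing_inv_mul _ (Ne.isUnit h0), Matrix.one_mul]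
      _ = (K θ₀)⁻¹ * -(K' * (K θ₀)⁻¹) := by rw [h2]
      _ = -((K θ₀)⁻¹ * K' * (K θ₀)⁻¹) := by rw [Matrix.mul_neg, Matrix.mul_assoc]
  rwa [hGval] at hG

end GPAux

theorem gp_loglik_derivative
    {n : ℕ} (hn : 1 ≤ n)
    (K : ℝ → Matrix (Fin n) (Fin n) ℝ) (K' : Matrix (Fin n) (Fin n) ℝ)
    (θ₀ : ℝ) (hK : HasDerivAt K K' θ₀)
    (hinv : IsUnit (K θ₀).det) (hdet : 0 < (K θ₀).det)
    (y : Fin n → ℝ) :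
    HasDerivAt
      (fun θ => -(1 / 2) * (y ⬝ᵥ ((K θ)⁻¹ *ᵥ y)) - (1 / 2) * Real.log (K θ).det)
      ((1 / 2) * (y ⬝ᵥ ((K θ₀)⁻¹ *ᵥ (K' *ᵥ ((K θ₀)⁻¹ *ᵥ y)))) -
        (1 / 2) * ((K θ₀)⁻¹ * K').trace) θ₀ := by
  have h0 : (K θ₀).det ≠ 0 := ne_of_gt hdet
  have hinvD := gp_inv_hasDerivAt hK h0
  -- derivative of the quadratic form
  have hexp : ∀ (M : Matrix (Fin n) (Fin n) ℝ),
      y ⬝ᵥ (M *ᵥ y) = ∑ i, ∑ j, y i * (M i j * y j) := by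
    intro M; simp [dotProduct, Matrix.mulVec, Finset.mul_sum]
  have h1 : HasDerivAt (fun θ => y ⬝ᵥ ((K θ)⁻¹ *ᵥ y))
      (y ⬝ᵥ ((-((K θ₀)⁻¹ * K' * (K θ₀)⁻¹)) *ᵥ y)) θ₀ := by
    simp only [hexp]
    exact HasDerivAt.fun_sum fun i _ => HasDerivAt.fun_sum fun j _ =>
      ((gp_entry_hasDerivAt hinvD i j).mul_const (y j)).const_mul (y i)
  -- derivative of log det
  have hlog : HasDerivAt (fun θ => Real.log (K θ).det)
      (((K θ₀).adjugate * K').trace / (K θ₀).det) θ₀ :=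
    (gp_det_hasDerivAt hK).log h0
  have hadjtr : ((K θ₀).adjugate * K').trace = (K θ₀).det * ((K θ₀)⁻¹ * K').trace := by
    have hadj : (K θ₀).adjugate = (K θ₀).det • (K θ₀)⁻¹ := by
      rw [Matrix.inv_def, Ring.inverse_eq_inv', smul_smul,
        mul_inv_cancel₀ h0, one_smul]
    rw [hadj, Matrix.smul_mul, Matrix.trace_smul, smul_eq_mul]
  have hmain := (h1.const_mul (-(1/2) : ℝ)).sub (hlog.const_mul ((1/2) : ℝ))
  convert hmain using 1
  · rfl
  · rfl
  · rfl
  rw [Matrix.neg_mulVec, dotProduct_neg, hadjtr, Matrix.mulVec_mulVec, Matrix.mulVec_mulVec]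
  field_simp
end
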